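/- arXiv:1810.05283 — 13 statements merged into one kernel-verified Lean document; each statement's English description precedes it below -/
import Mathlib

section
/- Proposition 1. Let j ≥ 1 be an integer and let α, γ ∈ ℝ satisfy cos(γ/2)·sin(α/2) = cos(jπ/(2j+1)). Then the real part of the quaternion (Q¹)ʲ · Q⁴ equals cos(jπ/(2j+1)); equivalently, the internal rotation angle θ_{41ʲ} = 2·arccos(Re((Q¹)ʲ · Q⁴)) generated by the cell with itinerary 41ʲ equals 2jπ/(2j+1). -/
/-!
`Q¹` is a unit quaternion, so `q² = 2 Re(q) q - 1` and its powers are Chebyshev polynomials of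
the second kind in `Re q`: `qⁿ = U_{n-1}(Re q) q - U_{n-2}(Re q)`. Under the resonance condition
`Re Q¹ = 1 - 2 cos² φ = cos (π - 2φ)` with `φ = jπ/(2j+1)`, and `j (π - 2φ) = φ`, so
`U_{n-1}(cos θ) sin θ = sin (nθ)` turns `Re((Q¹)ʲ Q⁴)` into a trigonometric expression in `φ`,
which collapses to `cos φ`.
-/

open Quaternion Polynomial Polynomial.Chebyshev Real

/-- Quaternion representation of the atomic rotation in atom `P₁` (with `β = α`). -/
noncomputable def Q1 (α γ : ℝ) : ℍ[ℝ] :=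
  ⟨cos (α/2)^2 - cos γ * sin (α/2)^2,
   cos (α/2) * sin (α/2) * sin γ,
   -(sin (α/2)^2) * sin γ,
   sin (α/2) * cos (α/2) * (1 + cos γ)⟩

/-- Quaternion representation of the atomic rotation in atom `P₄` (with `β = α`). -/
noncomputable def Q4 (α γ : ℝ) : ℍ[ℝ] :=
  ⟨1 - 2 * cos (α/2)^2 * cos (γ/2)^2,
   -2 * sin (α/2) * cos (α/2) * sin (γ/2) * cos (γ/2),
   -2 * cos (α/2)^2 * sin (γ/2) * cos (γ/2),
   -2 * sin (α/2) * cos (α/2) * cos (γ/2)^2⟩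

theorem Polynomial.Chebyshev.pow_eq_U_eval_smul_sub {R A : Type*} [CommRing R] [Ring A]
    [Algebra R A] {a : A} {c : R} (ha : a * a = (2 * c) • a - 1) (n : ℕ) :
    a ^ n = (U R (n - 1)).eval c • a - (U R (n - 2)).eval c • (1 : A) := by
  induction n with
  | zero => simp [U_neg_one, U_neg_two]
  | succ n ih =>
    have hU : U R ((n + 1 : ℕ) - 1) = 2 * X * U R (n - 1) - U R (n - 2) := by
      rw [show ((n + 1 : ℕ) : ℤ) - 1 = n - 1 + 1 by push_cast; ring, U_add_one]
      ring_nf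
    rw [pow_succ, ih, sub_mul, smul_mul_assoc, ha, hU,
      show ((n + 1 : ℕ) : ℤ) - 2 = n - 1 by push_cast; ring]
    simp only [eval_sub, eval_mul, eval_X, eval_ofNat, smul_mul_assoc, one_mul, smul_sub]
    module

namespace Quaternion

theorem mul_self_eq_two_re_smul_sub_normSq {R : Type*} [CommRing R] (q : ℍ[R]) :
    q * q = (2 * q.re) • q - ((normSq q : R) : ℍ[R]) := by
  rw [← self_mul_star, star_eq_two_re_sub, mul_sub, mul_coe_eq_smul, sub_sub_cancel]

theorem re_pow_mul_mul_sin {q : ℍ[ℝ]} (hq : normSq q = 1) {θ : ℝ} (hθ : q.re = cos θ)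
    (p : ℍ[ℝ]) (n : ℕ) :
    (q ^ n * p).re * sin θ = (q * p).re * sin (n * θ) - p.re * sin ((n - 1) * θ) := by
  have hsq : q * q = (2 * q.re) • q - 1 := by
    rw [mul_self_eq_two_re_smul_sub_normSq, hq, coe_one]
  have h1 := U_real_cos θ (n - 1)
  have h2 := U_real_cos θ (n - 2)
  push_cast at h1 h2
  rw [sub_add_cancel] at h1
  rw [show (n : ℝ) - 2 + 1 = n - 1 by ring] at h2
  rw [pow_eq_U_eval_smul_sub hsq, sub_mul, smul_mul_assoc, smul_mul_assoc, one_mul, re_sub,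
    re_smul, re_smul, hθ]
  linear_combination (q * p).re * h1 - p.re * h2

theorem re_pow_mul_mul_sin_two_mul {q : ℍ[ℝ]} (hq : normSq q = 1) {φ : ℝ}
    (hre : q.re = 1 - 2 * cos φ ^ 2) (p : ℍ[ℝ]) {n : ℕ} (hφ : (2 * n + 1) * φ = n * π) :
    (q ^ n * p).re * sin (2 * φ) = (q * p).re * sin φ + p.re * sin (3 * φ) := by
  have h := re_pow_mul_mul_sin hq (θ := π - 2 * φ)
    (by rw [cos_pi_sub, cos_two_mul, hre]; ring) p n
  rw [sin_pi_sub, show (n : ℝ) * (π - 2 * φ) = φ by linear_combination -hφ,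
    show ((n : ℝ) - 1) * (π - 2 * φ) = 3 * φ - π by linear_combination -hφ, sin_sub_pi] at h
  linear_combination h

end Quaternion

theorem natCast_mul_pi_div_two_mul_add_one_mem_Ioo {j : ℕ} (hj : 1 ≤ j) :
    (j : ℝ) * π / (2 * j + 1) ∈ Set.Ioo 0 (π / 2) := by
  have hj' : (1 : ℝ) ≤ j := by exact_mod_cast hj
  constructor
  · positivity
  · rw [div_lt_div_iff₀ (by positivity) two_pos]
    nlinarith [pi_pos]

section Atoms

variable (α γ : ℝ)

theorem re_Q1 : (Q1 α γ).re = 1 - 2 * (cos (γ / 2) * sin (α / 2)) ^ 2 := by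
  have hγ : cos γ = 2 * cos (γ / 2) ^ 2 - 1 := by
    rw [← cos_two_mul, mul_div_cancel₀ γ two_ne_zero]
  simp only [Q1, hγ]
  linear_combination sin_sq_add_cos_sq (α / 2)

theorem normSq_Q1 : normSq (Q1 α γ) = 1 := by
  rw [normSq_def']
  simp only [Q1]
  linear_combination (sin (α / 2) ^ 2 + cos (α / 2) ^ 2 + 1) * sin_sq_add_cos_sq (α / 2) +
    (sin (α / 2) ^ 2 + cos (α / 2) ^ 2) * sin (α / 2) ^ 2 * sin_sq_add_cos_sq γ

theorem re_Q1_mul_Q4 :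
    (Q1 α γ * Q4 α γ).re = (Q4 α γ).re * (1 - 4 * (cos (γ / 2) * sin (α / 2)) ^ 2) +
      2 * (cos (γ / 2) * sin (α / 2)) ^ 2 := by
  have hγ : cos γ = 2 * cos (γ / 2) ^ 2 - 1 := by
    rw [← cos_two_mul, mul_div_cancel₀ γ two_ne_zero]
  have hγ' : sin γ = 2 * sin (γ / 2) * cos (γ / 2) := by
    rw [← sin_two_mul, mul_div_cancel₀ γ two_ne_zero]
  rw [re_mul]
  simp only [Q1, Q4, hγ, hγ']
  linear_combination (1 - 2 * cos (α / 2) ^ 2 * cos (γ / 2) ^ 2) * sin_sq_add_cos_sq (α / 2)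

end Atoms

/-- Proposition 1: if `cos(γ/2)·sin(α/2) = cos(jπ/(2j+1))` then the real part of
`(Q¹)ʲ · Q⁴` equals `cos(jπ/(2j+1))`, equivalently the internal rotation angle
`θ_{41ʲ} = 2·arccos(Re((Q¹)ʲ · Q⁴))` equals `2jπ/(2j+1)`. -/
theorem prop1_resonance (j : ℕ) (hj : 1 ≤ j) (α γ : ℝ)
    (h : cos (γ/2) * sin (α/2) = cos ((j : ℝ) * π / (2 * (j : ℝ) + 1))) :
    (Q1 α γ ^ j * Q4 α γ).re = cos ((j : ℝ) * π / (2 * (j : ℝ) + 1)) ∧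
    2 * arccos ((Q1 α γ ^ j * Q4 α γ).re) = 2 * (j : ℝ) * π / (2 * (j : ℝ) + 1) := by
  set φ := (j : ℝ) * π / (2 * j + 1) with hφ
  obtain ⟨hφ0, hφπ⟩ : φ ∈ Set.Ioo 0 (π / 2) := natCast_mul_pi_div_two_mul_add_one_mem_Ioo hj
  have hres : (2 * j + 1) * φ = j * π := by rw [hφ]; field_simp
  have key := re_pow_mul_mul_sin_two_mul (normSq_Q1 α γ) (by rw [re_Q1, h]) (Q4 α γ) hres
  rw [re_Q1_mul_Q4, h, sin_two_mul, sin_three_mul] at key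
  have hsin : sin φ ≠ 0 := (sin_pos_of_pos_of_lt_pi hφ0 (by linarith)).ne'
  have hcos : cos φ ≠ 0 := (cos_pos_of_mem_Ioo ⟨by linarith, hφπ⟩).ne'
  -- the `(Q4 α γ).re` terms cancel because `sin (3φ) = (4 cos² φ - 1) sin φ`
  have hre : (Q1 α γ ^ j * Q4 α γ).re = cos φ := by
    refine mul_left_cancel₀ (mul_ne_zero (mul_ne_zero two_ne_zero hsin) hcos) ?_
    linear_combination key - 4 * (Q4 α γ).re * sin φ * sin_sq_add_cos_sq φ
  refine ⟨hre, ?_⟩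
  rw [hre, arccos_cos hφ0.le (by linarith)]
  ring
end

section
/- For all α, γ ∈ ℝ and every integer j ≥ 1, writing q⁽ʲ⁾ = (Q¹)ʲ · Q⁴ = ⟨q₁,q₂,q₃,q₄⟩ and x = c_γ·s_α, the three imaginary components satisfy: q₂ = (−1)^{j−1}·s_γ·c_α·[ U_{2j+1}(x) + 2·U_{2j−1}(x) ], q₃ = (−1)^{j−1}·s_γ·[ 2·c_γ·U_{2j}(x) − s_α·( U_{2j+1}(x) + 2·U_{2j−1}(x) ) ], and q₄ = (−1)^{j−1}·c_α·c_γ·U_{2j+1}(x). -/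
/-!
`Q¹` is a unit quaternion with real part `1 - 2x²`, so `(Q¹)² = (2 - 4x²) Q¹ - 1` and every
coordinate of `(Q¹)ʲ Q⁴` satisfies `u (j + 2) = (2 - 4x²) u (j + 1) - u j`. Since
`U (n + 4) = (4x² - 2) U (n + 2) - U n`, the sequences `(-1)^(j+1) U_{2j+k}(x)` satisfy the same
recurrence, and so do the claimed right-hand sides (with the sign `(-1)^(j+1)` they also hold at
`j = 0`). Two solutions of a second-order recurrence agreeing at `j = 0, 1` are equal.
-/

open Quaternion Polynomial Polynomial.Chebyshev Real

section Recurrence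

variable {R : Type*} [CommRing R]

def chebyshevRec (c : R) : LinearRecurrence R := ⟨2, ![-1, c]⟩

theorem isSolution_chebyshevRec_iff (c : R) (u : ℕ → R) :
    (chebyshevRec c).IsSolution u ↔ ∀ n, u (n + 2) = c * u (n + 1) - u n := by
  change (∀ n, u (n + 2) = ∑ i : Fin 2, ![-1, c] i * u (n + i)) ↔ _
  simp [Fin.sum_univ_two, neg_add_eq_sub]

theorem eq_of_isSolution_chebyshevRec {c : R} {u v : ℕ → R} (hu : (chebyshevRec c).IsSolution u)
    (hv : (chebyshevRec c).IsSolution v) (h0 : u 0 = v 0) (h1 : u 1 = v 1) : u = v := by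
  refine ((chebyshevRec c).eq_iff_eqOn_range_order u v hu hv).2 fun n hn => ?_
  obtain rfl | rfl : n = 0 ∨ n = 1 := by simp [chebyshevRec] at hn; omega
  exacts [h0, h1]

theorem isSolution_chebyshevRec_apply_pow_mul {A : Type*} [Ring A] [Algebra R A] {c : R} {q : A}
    (hq : q ^ 2 = c • q - 1) (φ : A →ₗ[R] R) (b : A) :
    (chebyshevRec c).IsSolution fun n => φ (q ^ n * b) := by
  rw [isSolution_chebyshevRec_iff]
  intro n
  rw [pow_add, hq, mul_sub, mul_smul_comm, mul_one, ← pow_succ, sub_mul, smul_mul_assoc,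
    map_sub, map_smul, smul_eq_mul]

theorem apply_pow_mul_eq_of_isSolution {A : Type*} [Ring A] [Algebra R A] {c : R}
    {q : A} (hq : q ^ 2 = c • q - 1) (φ : A →ₗ[R] R) (b : A) {g : ℕ → R}
    (hg : (chebyshevRec c).IsSolution g) (h0 : φ b = g 0) (h1 : φ (q * b) = g 1) (n : ℕ) :
    φ (q ^ n * b) = g n :=
  congrFun (eq_of_isSolution_chebyshevRec (isSolution_chebyshevRec_apply_pow_mul hq φ b) hg
    (by simpa using h0) (by simpa using h1)) n

end Recurrence

section Chebyshev

variable {R : Type*} [CommRing R]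

theorem Polynomial.Chebyshev.U_three : U R 3 = 8 * X ^ 3 - 4 * X := by
  rw [show (3 : ℤ) = 1 + 2 by norm_num, U_add_two, show (1 : ℤ) + 1 = 2 by norm_num, U_one, U_two]
  ring

theorem Polynomial.Chebyshev.U_add_four (n : ℤ) :
    U R (n + 4) = (4 * X ^ 2 - 2) * U R (n + 2) - U R n := by
  have h2 := U_add_two R n
  have h3 := U_add_two R (n + 1)
  have h4 := U_add_two R (n + 2)
  rw [show n + 1 + 1 = n + 2 by ring, show n + 1 + 2 = n + 3 by ring] at h3
  rw [show n + 2 + 1 = n + 3 by ring, show n + 2 + 2 = n + 4 by ring] at h4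
  linear_combination h4 + 2 * X * h3 + h2

noncomputable def signedU (x : R) (k : ℤ) (n : ℕ) : R := (-1) ^ (n + 1) * (U R (2 * n + k)).eval x

theorem isSolution_signedU (x : R) (k : ℤ) :
    (chebyshevRec (2 - 4 * x ^ 2)).IsSolution (signedU x k) := by
  rw [isSolution_chebyshevRec_iff]
  intro n
  simp only [signedU]
  push_cast
  rw [show 2 * ((n : ℤ) + 2) + k = 2 * n + k + 4 by ring,
    show 2 * ((n : ℤ) + 1) + k = 2 * n + k + 2 by ring, U_add_four]
  simp only [eval_sub, eval_mul, eval_ofNat, eval_pow, eval_X]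
  ring

theorem signedU_zero (x : R) (k : ℤ) : signedU x k 0 = -(U R k).eval x := by
  simp [signedU]

theorem signedU_one (x : R) (k : ℤ) : signedU x k 1 = (U R (k + 2)).eval x := by
  simp [signedU, add_comm]

end Chebyshev

theorem Quaternion.sq_eq_two_mul_re_smul_sub_normSq {R : Type*} [CommRing R] (a : ℍ[R]) :
    a ^ 2 = (2 * a.re) • a - ((normSq a : R) : ℍ[R]) := by
  rw [sq, ← mul_coe_eq_smul, ← self_mul_star, ← mul_sub, ← self_add_star', add_sub_cancel_right]

theorem Q1_eq_half_angles (α γ : ℝ) : Q1 α γ =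
    ⟨cos (α/2)^2 - (2 * cos (γ/2)^2 - 1) * sin (α/2)^2,
     2 * cos (α/2) * sin (α/2) * sin (γ/2) * cos (γ/2),
     -2 * sin (α/2)^2 * sin (γ/2) * cos (γ/2),
     2 * sin (α/2) * cos (α/2) * cos (γ/2)^2⟩ := by
  have hcos : cos γ = 2 * cos (γ/2)^2 - 1 := by rw [← cos_two_mul]; ring_nf
  have hsin : sin γ = 2 * sin (γ/2) * cos (γ/2) := by rw [← sin_two_mul]; ring_nf
  ext <;> simp only [Q1, hcos, hsin] <;> ring

theorem Q1_sq (α γ : ℝ) :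
    Q1 α γ ^ 2 = (2 - 4 * (cos (γ/2) * sin (α/2)) ^ 2) • Q1 α γ - 1 := by
  have ha := sin_sq_add_cos_sq (α/2)
  have hg := sin_sq_add_cos_sq (γ/2)
  have hre : 2 * (Q1 α γ).re = 2 - 4 * (cos (γ/2) * sin (α/2)) ^ 2 := by
    rw [Q1_eq_half_angles]; grind
  have hnorm : normSq (Q1 α γ) = 1 := by
    rw [normSq_def', Q1_eq_half_angles]; grind
  rw [sq_eq_two_mul_re_smul_sub_normSq, hre, hnorm, Quaternion.coe_one]

theorem imI_Q1_pow_mul_Q4 (α γ : ℝ) (n : ℕ) :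
    (Q1 α γ ^ n * Q4 α γ).imI = sin (γ/2) * cos (α/2) *
      (signedU (cos (γ/2) * sin (α/2)) 1 n + 2 * signedU (cos (γ/2) * sin (α/2)) (-1) n) := by
  have ha := sin_sq_add_cos_sq (α/2)
  have hg := sin_sq_add_cos_sq (γ/2)
  set x := cos (γ/2) * sin (α/2) with hx
  have hsol : (chebyshevRec (2 - 4 * x ^ 2)).IsSolution
      fun n => sin (γ/2) * cos (α/2) * (signedU x 1 n + 2 * signedU x (-1) n) :=
    (chebyshevRec _).solSpace.smul_mem (sin (γ/2) * cos (α/2)) (add_mem (isSolution_signedU x 1)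
      ((chebyshevRec _).solSpace.smul_mem 2 (isSolution_signedU x (-1))))
  refine apply_pow_mul_eq_of_isSolution (Q1_sq α γ)
    (show ℍ[ℝ] →ₗ[ℝ] ℝ from QuaternionAlgebra.imIₗ _ _ _) (Q4 α γ) hsol ?_ ?_ n
  · change (Q4 α γ).imI = _
    rw [signedU_zero, signedU_zero, U_one, U_neg_one]
    simp only [Q4, eval_mul, eval_X, eval_ofNat, eval_zero, hx]
    ring
  · change (Q1 α γ * Q4 α γ).imI = _
    rw [signedU_one, signedU_one, Quaternion.imI_mul, Q1_eq_half_angles]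
    norm_num only [U_three, U_one]
    simp only [Q4, eval_mul, eval_X, eval_ofNat, eval_sub, eval_pow, hx]
    grind

theorem imJ_Q1_pow_mul_Q4 (α γ : ℝ) (n : ℕ) :
    (Q1 α γ ^ n * Q4 α γ).imJ = sin (γ/2) *
      (2 * cos (γ/2) * signedU (cos (γ/2) * sin (α/2)) 0 n - sin (α/2) *
        (signedU (cos (γ/2) * sin (α/2)) 1 n + 2 * signedU (cos (γ/2) * sin (α/2)) (-1) n)) := by
  have ha := sin_sq_add_cos_sq (α/2)
  have hg := sin_sq_add_cos_sq (γ/2)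
  set x := cos (γ/2) * sin (α/2) with hx
  have hsol : (chebyshevRec (2 - 4 * x ^ 2)).IsSolution fun n => sin (γ/2) *
      (2 * cos (γ/2) * signedU x 0 n - sin (α/2) * (signedU x 1 n + 2 * signedU x (-1) n)) :=
    (chebyshevRec _).solSpace.smul_mem (sin (γ/2)) (sub_mem
      ((chebyshevRec _).solSpace.smul_mem (2 * cos (γ/2)) (isSolution_signedU x 0))
      ((chebyshevRec _).solSpace.smul_mem (sin (α/2)) (add_mem (isSolution_signedU x 1)
        ((chebyshevRec _).solSpace.smul_mem 2 (isSolution_signedU x (-1))))))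
  refine apply_pow_mul_eq_of_isSolution (Q1_sq α γ)
    (show ℍ[ℝ] →ₗ[ℝ] ℝ from QuaternionAlgebra.imJₗ _ _ _) (Q4 α γ) hsol ?_ ?_ n
  · change (Q4 α γ).imJ = _
    rw [signedU_zero, signedU_zero, signedU_zero, U_zero, U_one, U_neg_one]
    simp only [Q4, eval_mul, eval_X, eval_ofNat, eval_zero, eval_one, hx]
    grind
  · change (Q1 α γ * Q4 α γ).imJ = _
    rw [signedU_one, signedU_one, signedU_one, Quaternion.imJ_mul, Q1_eq_half_angles]
    norm_num only [U_three, U_one, U_two]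
    simp only [Q4, eval_mul, eval_X, eval_ofNat, eval_sub, eval_pow, eval_one, hx]
    grind

theorem imK_Q1_pow_mul_Q4 (α γ : ℝ) (n : ℕ) :
    (Q1 α γ ^ n * Q4 α γ).imK =
      cos (α/2) * cos (γ/2) * signedU (cos (γ/2) * sin (α/2)) 1 n := by
  have ha := sin_sq_add_cos_sq (α/2)
  have hg := sin_sq_add_cos_sq (γ/2)
  set x := cos (γ/2) * sin (α/2) with hx
  have hsol : (chebyshevRec (2 - 4 * x ^ 2)).IsSolution
      fun n => cos (α/2) * cos (γ/2) * signedU x 1 n :=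
    (chebyshevRec _).solSpace.smul_mem (cos (α/2) * cos (γ/2)) (isSolution_signedU x 1)
  refine apply_pow_mul_eq_of_isSolution (Q1_sq α γ)
    (show ℍ[ℝ] →ₗ[ℝ] ℝ from QuaternionAlgebra.imKₗ _ _ _) (Q4 α γ) hsol ?_ ?_ n
  · change (Q4 α γ).imK = _
    rw [signedU_zero, U_one]
    simp only [Q4, eval_mul, eval_X, eval_ofNat, hx]
    ring
  · change (Q1 α γ * Q4 α γ).imK = _
    rw [signedU_one, Quaternion.imK_mul, Q1_eq_half_angles]
    norm_num only [U_three]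
    simp only [Q4, eval_mul, eval_X, eval_ofNat, eval_sub, eval_pow, hx]
    grind

/-- The three imaginary components of `q⁽ʲ⁾ = (Q¹)ʲ · Q⁴` in terms of Chebyshev
polynomials evaluated at `x = cos(γ/2)·sin(α/2)`. -/
theorem im_q_pow_j_mul_Q4 (α γ : ℝ) (j : ℕ) (hj : 1 ≤ j) :
    (Q1 α γ ^ j * Q4 α γ).imI =
      (-1 : ℝ) ^ (j - 1) * sin (γ/2) * cos (α/2) *
        ((U ℝ (2 * (j : ℤ) + 1)).eval (cos (γ/2) * sin (α/2)) +
          2 * (U ℝ (2 * (j : ℤ) - 1)).eval (cos (γ/2) * sin (α/2))) ∧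
    (Q1 α γ ^ j * Q4 α γ).imJ =
      (-1 : ℝ) ^ (j - 1) * sin (γ/2) *
        (2 * cos (γ/2) * (U ℝ (2 * (j : ℤ))).eval (cos (γ/2) * sin (α/2)) -
          sin (α/2) * ((U ℝ (2 * (j : ℤ) + 1)).eval (cos (γ/2) * sin (α/2)) +
            2 * (U ℝ (2 * (j : ℤ) - 1)).eval (cos (γ/2) * sin (α/2)))) ∧
    (Q1 α γ ^ j * Q4 α γ).imK =
      (-1 : ℝ) ^ (j - 1) * cos (α/2) * cos (γ/2) *
        (U ℝ (2 * (j : ℤ) + 1)).eval (cos (γ/2) * sin (α/2)) := by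
  obtain ⟨m, rfl⟩ : ∃ m, j = m + 1 := ⟨j - 1, by omega⟩
  rw [imI_Q1_pow_mul_Q4, imJ_Q1_pow_mul_Q4, imK_Q1_pow_mul_Q4]
  simp only [signedU, ← sub_eq_add_neg, add_zero, Nat.add_sub_cancel, pow_succ]
  refine ⟨by ring, by ring, by ring⟩
end

section
/- Let q = ⟨q₁,q₂,q₃,q₄⟩ be a quaternion over ℝ with norm 1. Then for every integer n ≥ 1, qⁿ = ⟨ Tₙ(q₁), U_{n−1}(q₁)·q₂, U_{n−1}(q₁)·q₃, U_{n−1}(q₁)·q₄ ⟩, where Tₙ(q₁) and U_{n−1}(q₁) denote the evaluations of the Chebyshev polynomials at the real part q₁. -/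
open Quaternion Polynomial Polynomial.Chebyshev

/-!
A unit quaternion `q` satisfies `q² = 2 q₁ q - 1`, because `q + q̄ = 2 q₁` and `q q̄ = 1`.
Any element `x` of an `R`-algebra with `x² = 2 a x - 1` for a scalar `a` has
`xⁿ = Tₙ(a) + U_{n-1}(a) (x - a)`: both sides obey the Chebyshev three-term recurrence.
Reading off the components of this identity for `x = q`, `a = q₁` gives the theorem.
-/

namespace Polynomial.Chebyshev

theorem pow_eq_T_add_U_smul {R A : Type*} [CommRing R] [Ring A] [Algebra R A] {x : A} {a : R}
    (hx : x * x = (2 * a) • x - 1) (n : ℕ) :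
    x ^ n = algebraMap R A ((T R n).eval a) + (U R (n - 1)).eval a • (x - algebraMap R A a) := by
  induction n with
  | zero => simp
  | succ n ih =>
    have hT := congrArg (eval a) (T_eq_X_mul_U_sub_U R (n - 1))
    have hU := congrArg (eval a) (U_eq_X_mul_U_add_T R (n - 1))
    rw [show (n : ℤ) - 1 + 2 = n + 1 by ring] at hT
    rw [sub_add_cancel] at hT hU
    simp only [eval_add, eval_sub, eval_mul, eval_X] at hT hU
    push_cast
    rw [add_sub_cancel_right, pow_succ, ih, add_mul, smul_mul_assoc, sub_mul, hx, hT, hU]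
    simp only [Algebra.algebraMap_eq_smul_one, smul_mul_assoc, one_mul]
    module

end Polynomial.Chebyshev

theorem Quaternion.mul_self_eq_of_normSq_eq_one {q : ℍ[ℝ]} (hq : normSq q = 1) :
    q * q = (2 * q.re) • q - 1 := by
  calc q * q = q * (q + star q) - q * star q := by rw [mul_add, add_sub_cancel_right]
    _ = (2 * q.re) • q - 1 := by
      rw [self_add_star', self_mul_star, hq, mul_coe_eq_smul, coe_one]

theorem unit_quaternion_pow_general (q : ℍ[ℝ]) (hq : ‖q‖ = 1) (n : ℕ) :
    q ^ n =
      ⟨(T ℝ (n : ℤ)).eval q.re,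
       (U ℝ ((n : ℤ) - 1)).eval q.re * q.imI,
       (U ℝ ((n : ℤ) - 1)).eval q.re * q.imJ,
       (U ℝ ((n : ℤ) - 1)).eval q.re * q.imK⟩ := by
  have hnormSq : normSq q = 1 := by rw [normSq_eq_norm_mul_self, hq, mul_one]
  rw [pow_eq_T_add_U_smul (mul_self_eq_of_normSq_eq_one hnormSq)]
  ext <;> simp

/-- For a unit quaternion `q = ⟨q₁,q₂,q₃,q₄⟩` and `n ≥ 1`,
`qⁿ = ⟨Tₙ(q₁), U_{n−1}(q₁)·q₂, U_{n−1}(q₁)·q₃, U_{n−1}(q₁)·q₄⟩`. -/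
theorem unit_quaternion_pow (q : ℍ[ℝ]) (hq : ‖q‖ = 1) (n : ℕ) (hn : 1 ≤ n) :
    q ^ n =
      ⟨(T ℝ (n : ℤ)).eval q.re,
       (U ℝ ((n : ℤ) - 1)).eval q.re * q.imI,
       (U ℝ ((n : ℤ) - 1)).eval q.re * q.imJ,
       (U ℝ ((n : ℤ) - 1)).eval q.re * q.imK⟩ :=
  unit_quaternion_pow_general q hq n
end

section
/- For every integer j ≥ 1, the polynomial identity 2X · U_{j−1}(−T₂(X)) = (−1)^{j−1} · U_{2j−1}(X) holds in the polynomial ring R[X] over any commutative ring R, where U_{j−1}(−T₂(X)) denotes the composition of U_{j−1} with −T₂. -/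
open Polynomial Polynomial.Chebyshev

private lemma U_aux (R : Type*) [CommRing R] (n : ℤ) :
    U R (n + 2) + U R (n - 2) = (4 * X ^ 2 - 2) * U R n := by
  have h1 : U R (n + 2) = 2 * X * U R (n + 1) - U R n := U_add_two R n
  have h2 : U R (n + 1) = 2 * X * U R n - U R (n - 1) := U_add_one R n
  have h3 : U R (n - 2) = 2 * X * U R (n - 1) - U R n := U_sub_two R n
  rw [h1, h2, h3]; ring

private lemma U_comp_aux (R : Type*) [CommRing R] (k : ℕ) :
    2 * (X : R[X]) * (U R (k : ℤ)).comp (-(T R 2)) =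
      (-1 : R[X]) ^ k * U R (2 * (k : ℤ) + 1) := by
  induction k using Nat.twoStepInduction with
  | zero =>
      simp [U_one]
  | one =>
      have h3 : U R 3 = 2 * X * U R 2 - U R 1 := by
        have := U_add_two R 1; norm_num at this ⊢; linear_combination this
      have e : (2 * (1:ℤ) + 1) = 3 := by norm_num
      simp only [Nat.cast_one, e, h3, U_one, U_two, T_two]
      simp
      ring
  | more k ih1 ih2 =>
      have hk : ((k + 2 : ℕ) : ℤ) = (k : ℤ) + 2 := by push_cast; ring
      have hrec : U R ((k : ℤ) + 2) = 2 * X * U R ((k : ℤ) + 1) - U R (k : ℤ) :=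
        U_add_two R k
      have haux := U_aux R (2 * (k : ℤ) + 3)
      have e1 : (2 * (k : ℤ) + 3) + 2 = 2 * ((k : ℤ) + 2) + 1 := by ring
      have e2 : (2 * (k : ℤ) + 3) - 2 = 2 * (k : ℤ) + 1 := by ring
      have e3 : 2 * (k : ℤ) + 3 = 2 * ((k : ℤ) + 1) + 1 := by ring
      rw [e1, e2, e3] at haux
      have hk1 : ((k + 1 : ℕ) : ℤ) = (k : ℤ) + 1 := by push_cast; ring
      rw [hk1] at ih2
      rw [hk, hrec]
      have hcomp : ((2 * X * U R ((k : ℤ) + 1) - U R (k : ℤ)).comp (-(T R 2)) : R[X]) =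
          2 * (-(T R 2)) * (U R ((k : ℤ) + 1)).comp (-(T R 2)) -
            (U R (k : ℤ)).comp (-(T R 2)) := by
        simp [sub_comp, mul_comp]
      rw [hcomp]
      have key : 2 * (X : R[X]) *
          (2 * (-(T R 2)) * (U R ((k : ℤ) + 1)).comp (-(T R 2)) -
            (U R (k : ℤ)).comp (-(T R 2))) =
          -2 * T R 2 * (2 * X * (U R ((k : ℤ) + 1)).comp (-(T R 2))) -
            2 * X * (U R (k : ℤ)).comp (-(T R 2)) := by ring
      rw [key, ih1, ih2, T_two]
      rw [pow_succ, pow_succ]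
      linear_combination (-(-1 : R[X]) ^ k) * haux

/-- For `j ≥ 1`, `2X · U_{j−1}(−T₂(X)) = (−1)^{j−1} · U_{2j−1}(X)` in `R[X]`. -/
theorem U_comp_neg_T_two (R : Type*) [CommRing R] (j : ℕ) (hj : 1 ≤ j) :
    2 * (X : R[X]) * (U R ((j : ℤ) - 1)).comp (-(T R 2)) =
      (-1 : R[X]) ^ (j - 1) * U R (2 * (j : ℤ) - 1) := by
  obtain ⟨k, rfl⟩ := Nat.exists_eq_add_of_le hj
  have h := U_comp_aux R k
  have e1 : ((1 + k : ℕ) : ℤ) - 1 = (k : ℤ) := by push_cast; ring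
  have e2 : 2 * ((1 + k : ℕ) : ℤ) - 1 = 2 * (k : ℤ) + 1 := by push_cast; ring
  have e3 : (1 + k) - 1 = k := by omega
  rw [e1, e2, e3, h]
end

section
/- For all α, γ ∈ ℝ and every integer j ≥ 1, the j-th power of the quaternion Q¹ satisfies (Q¹)ʲ = ⟨ (−1)ʲ·T_{2j}(x), (−1)^{j−1}·c_α·s_γ·U_{2j−1}(x), (−1)ʲ·s_α·s_γ·U_{2j−1}(x), (−1)^{j−1}·c_α·c_γ·U_{2j−1}(x) ⟩, where Tₙ(x) and Uₙ(x) denote evaluations of the Chebyshev polynomials at x = c_γ·s_α. -/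
open Quaternion Polynomial Polynomial.Chebyshev Real

/-!
With `x = cos (γ/2) * sin (α/2)`, the quaternion `-Q¹` is the square of `x + u` for the pure
quaternion `u = Q1axis α γ`, whose squared norm is `1 - x²`, so that `u² = x² - 1`. For any such
`u`, the recurrences `T (n+1) = X T n - (1 - X²) U (n-1)` and `U n = X U (n-1) + T n` give the
de Moivre-type formula `(x + u)ⁿ = T n (x) + U (n-1) (x) u`, hence `(Q¹)ʲ = (-1)ʲ (x + u)^(2j)`.
-/

theorem Polynomial.Chebyshev.algebraMap_add_pow_eq_T_add_U_mul {R A : Type*} [CommRing R]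
    [Ring A] [Algebra R A] (x : R) (u : A) (hu : u * u = algebraMap R A (x ^ 2 - 1)) (n : ℕ) :
    (algebraMap R A x + u) ^ n =
      algebraMap R A ((T R n).eval x) + algebraMap R A ((U R (n - 1)).eval x) * u := by
  induction n with
  | zero => simp
  | succ n ih =>
    have hT := congrArg (eval x) (T_eq_X_mul_T_sub_pol_U R ((n : ℤ) - 1))
    have hU := congrArg (eval x) (U_eq_X_mul_U_add_T R ((n : ℤ) - 1))
    simp only [eval_sub, eval_add, eval_mul, eval_X, eval_one, eval_pow, sub_add_cancel,
      show (n : ℤ) - 1 + 2 = n + 1 by ring] at hT hU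
    rw [pow_succ, ih, Nat.cast_succ, add_sub_cancel_right, hT, hU]
    simp only [Algebra.algebraMap_eq_smul_one, smul_mul_assoc, one_mul] at hu ⊢
    simp only [add_mul, mul_add, smul_mul_assoc, mul_smul_comm, one_mul, mul_one, hu, smul_smul]
    module

noncomputable def Q1axis (α γ : ℝ) : ℍ[ℝ] :=
  ⟨0, -(cos (α/2) * sin (γ/2)), sin (α/2) * sin (γ/2), -(cos (α/2) * cos (γ/2))⟩

@[simp] lemma Q1axis_re (α γ : ℝ) : (Q1axis α γ).re = 0 := rfl
@[simp] lemma Q1axis_imI (α γ : ℝ) : (Q1axis α γ).imI = -(cos (α/2) * sin (γ/2)) := rfl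
@[simp] lemma Q1axis_imJ (α γ : ℝ) : (Q1axis α γ).imJ = sin (α/2) * sin (γ/2) := rfl
@[simp] lemma Q1axis_imK (α γ : ℝ) : (Q1axis α γ).imK = -(cos (α/2) * cos (γ/2)) := rfl

lemma Q1axis_mul_self (α γ : ℝ) :
    Q1axis α γ * Q1axis α γ = algebraMap ℝ ℍ[ℝ] ((cos (γ/2) * sin (α/2)) ^ 2 - 1) := by
  rw [← sq, sq_eq_neg_normSq.2 (Q1axis_re α γ), normSq_def', Quaternion.algebraMap_def,
    ← Quaternion.coe_neg, Quaternion.coe_inj]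
  simp only [Q1axis_re, Q1axis_imI, Q1axis_imJ, Q1axis_imK]
  linear_combination
    -(cos (α/2) ^ 2 + sin (α/2) ^ 2) * sin_sq_add_cos_sq (γ/2) - sin_sq_add_cos_sq (α/2)

lemma Q1_eq_neg_sq (α γ : ℝ) :
    Q1 α γ = -(algebraMap ℝ ℍ[ℝ] (cos (γ/2) * sin (α/2)) + Q1axis α γ) ^ 2 := by
  rw [algebraMap_add_pow_eq_T_add_U_mul _ _ (Q1axis_mul_self α γ)]
  simp only [Nat.cast_ofNat, T_two, show (2 : ℤ) - 1 = 1 by norm_num, U_one, eval_sub, eval_mul,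
    eval_pow, eval_X, eval_ofNat, eval_one, Quaternion.algebraMap_def, coe_mul_eq_smul]
  have hcos : cos γ = 2 * cos (γ/2) ^ 2 - 1 := by rw [cos_sq]; ring_nf
  have hsin : sin γ = 2 * sin (γ/2) * cos (γ/2) := by rw [← sin_two_mul]; ring_nf
  ext <;> simp [Q1, hcos, hsin, -Quaternion.coe_mul, -Quaternion.coe_pow, -Quaternion.coe_sub]
  · linear_combination sin_sq_add_cos_sq (α/2)
  all_goals ring

/-- The `j`-th power of the quaternion `Q¹` in terms of Chebyshev polynomials
evaluated at `x = cos(γ/2)·sin(α/2)`. -/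
theorem Q1_pow (α γ : ℝ) (j : ℕ) (hj : 1 ≤ j) :
    Q1 α γ ^ j =
      ⟨(-1 : ℝ) ^ j * (T ℝ (2 * (j : ℤ))).eval (cos (γ/2) * sin (α/2)),
       (-1 : ℝ) ^ (j - 1) * cos (α/2) * sin (γ/2) *
         (U ℝ (2 * (j : ℤ) - 1)).eval (cos (γ/2) * sin (α/2)),
       (-1 : ℝ) ^ j * sin (α/2) * sin (γ/2) *
         (U ℝ (2 * (j : ℤ) - 1)).eval (cos (γ/2) * sin (α/2)),
       (-1 : ℝ) ^ (j - 1) * cos (α/2) * cos (γ/2) *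
         (U ℝ (2 * (j : ℤ) - 1)).eval (cos (γ/2) * sin (α/2))⟩ := by
  obtain ⟨k, rfl⟩ := Nat.exists_eq_add_of_le' hj
  rw [Q1_eq_neg_sq, ← neg_one_smul ℝ, _root_.smul_pow, ← pow_mul,
    algebraMap_add_pow_eq_T_add_U_mul _ _ (Q1axis_mul_self α γ), Quaternion.algebraMap_def,
    coe_mul_eq_smul]
  push_cast
  ext <;> simp [pow_succ] <;> ring
end

section
/- Let (S,d) be a compact metric space, M : S → S a bijection, and D ⊆ S a nonempty subset. Define E = ⋃_{n ∈ ℤ} Mⁿ(D). Assume: (i) for every y ∈ E there exists an integer k ≥ 0 with M^{−k}(y) ∈ D; and (ii) for every integer n ≥ 0 and every subset U ⊆ S such that M^{−i}(U) ∩ D = ∅ for all integers 0 ≤ i < n, the map M^{−n} is distance-preserving on U, i.e. d(M^{−n}(a), M^{−n}(b)) = d(a,b) for all a, b ∈ U. Then for every ε > 0 there exists a natural number N such that the closure of E is contained in ⋃_{n=0}^{N} Mⁿ(D_ε), where D_ε = { s ∈ S : the infimum distance from s to D is at most ε } is the closed ε-thickening of D. -/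
open Metric

/-- Finite-`N` coverage of the exceptional set: on a compact metric space `S`, for a
bijection `M = e` of `S`, a nonempty set of discontinuities `D`, and singular set
`E = ⋃_{n ∈ ℤ} Mⁿ(D)`, if (i) every point of `E` is hit by `D` after finitely many
backward iterates and (ii) `M^{−n}` is distance-preserving on any set whose first `n`
backward iterates avoid `D`, then for every `ε > 0` there is a finite `N` with
`closure E ⊆ ⋃_{n=0}^{N} Mⁿ(D_ε)`, where `D_ε` is the closed `ε`-thickening of `D`. -/
theorem finite_coverage_of_exceptional_set
    {S : Type*} [MetricSpace S] [CompactSpace S]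
    (e : S ≃ S) (D : Set S) (hD : D.Nonempty)
    (E : Set S) (hE : E = ⋃ n : ℤ, (e ^ n : S ≃ S) '' D)
    (hit : ∀ y ∈ E, ∃ k : ℕ, (e ^ (-(k : ℤ)) : S ≃ S) y ∈ D)
    (isom : ∀ n : ℕ, ∀ U : Set S,
      (∀ i : ℕ, i < n → ((e ^ (-(i : ℤ)) : S ≃ S) '' U) ∩ D = ∅) →
      ∀ a ∈ U, ∀ b ∈ U,
        dist ((e ^ (-(n : ℤ)) : S ≃ S) a) ((e ^ (-(n : ℤ)) : S ≃ S) b) = dist a b) :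
    ∀ ε > (0 : ℝ), ∃ N : ℕ,
      closure E ⊆ ⋃ (n : ℕ) (_ : n ≤ N),
        (e ^ (n : ℤ) : S ≃ S) '' {s : S | infDist s D ≤ ε} := by
  classical
  intro ε hε
  -- key lemma: each y ∈ E has a k such that the ball of radius ε around y is covered
  have key : ∀ y ∈ E, ∃ k : ℕ, ∀ x', dist x' y < ε →
      x' ∈ ⋃ (n : ℕ) (_ : n ≤ k), (e ^ (n : ℤ) : S ≃ S) '' {s : S | infDist s D ≤ ε} := by
    intro y hy
    have hex : ∃ k : ℕ, (e ^ (-(k : ℤ)) : S ≃ S) y ∈ D := hit y hy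
    refine ⟨Nat.find hex, ?_⟩
    set k := Nat.find hex with hkdef
    intro x' hx'
    have hinv : ∀ m : ℕ, (e ^ (m : ℤ) : S ≃ S) ((e ^ (-(m : ℤ)) : S ≃ S) x') = x' := by
      intro m
      rw [← Equiv.Perm.mul_apply, ← zpow_add]
      simp
    by_cases h : ∃ i, i < k ∧ (e ^ (-(i : ℤ)) : S ≃ S) x' ∈ D
    · obtain ⟨i, hik, hmem⟩ := h
      refine Set.mem_iUnion₂.mpr ⟨i, le_of_lt hik,
        ⟨(e ^ (-(i : ℤ)) : S ≃ S) x', ?_, hinv i⟩⟩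
      show infDist ((e ^ (-(i : ℤ)) : S ≃ S) x') D ≤ ε
      rw [Metric.infDist_zero_of_mem hmem]
      exact le_of_lt hε
    · push_neg at h
      have hU : ∀ i : ℕ, i < k → ((e ^ (-(i : ℤ)) : S ≃ S) '' ({x', y} : Set S)) ∩ D = ∅ := by
        intro i hik
        apply Set.eq_empty_iff_forall_notMem.mpr
        rintro z ⟨⟨w, hw, rfl⟩, hzD⟩
        rcases hw with rfl | rfl
        · exact h _ hik hzD
        · exact Nat.find_min hex hik hzD
      have hiso := isom k ({x', y} : Set S) hU x' (by simp) y (by simp)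
      have hyD : (e ^ (-(k : ℤ)) : S ≃ S) y ∈ D := Nat.find_spec hex
      refine Set.mem_iUnion₂.mpr ⟨k, le_refl k,
        ⟨(e ^ (-(k : ℤ)) : S ≃ S) x', ?_, hinv k⟩⟩
      have h1 : infDist ((e ^ (-(k : ℤ)) : S ≃ S) x') D ≤
          dist ((e ^ (-(k : ℤ)) : S ≃ S) x') ((e ^ (-(k : ℤ)) : S ≃ S) y) :=
        Metric.infDist_le_dist_of_mem hyD
      rw [hiso] at h1
      exact le_trans h1 (le_of_lt hx')
  -- choose k for each y in E
  choose! k hk using key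
  -- open cover of the compact closure of E by ε-balls centered in E
  have hcover : closure E ⊆ ⋃ y : E, ball (y : S) ε := by
    intro x hx
    rcases Metric.mem_closure_iff.mp hx ε hε with ⟨y, hyE, hxy⟩
    exact Set.mem_iUnion.mpr ⟨⟨y, hyE⟩, mem_ball.mpr hxy⟩
  have hcomp : IsCompact (closure E) := isClosed_closure.isCompact
  obtain ⟨t, ht⟩ := hcomp.elim_finite_subcover (fun y : E => ball (y : S) ε)
    (fun y => isOpen_ball) hcover
  refine ⟨t.sup (fun y => k (y : S)), ?_⟩
  intro x hx
  rcases Set.mem_iUnion₂.mp (ht hx) with ⟨y, hyt, hxy⟩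
  have hxU := hk (y : S) y.2 x (mem_ball.mp hxy)
  rcases Set.mem_iUnion₂.mp hxU with ⟨n, hn, hnmem⟩
  exact Set.mem_iUnion₂.mpr ⟨n, le_trans hn (Finset.le_sup (f := fun y : E => k (y : S)) hyt), hnmem⟩
end

section
/- For all α, β, γ ∈ ℝ and every point p ∈ S², the hemispherical-shell piecewise isometry satisfies M_{α,β,γ}(p) = S_yz( M_{−α,−β,−γ}( S_yz(p) ) ); that is, M_{α,β,γ} = S_yz ∘ M_{−α,−β,−γ} ∘ S_yz. -/
open Real

/-- Rotation of `ℝ³` by angle `θ` about the `z`-axis (coordinates `(x, y, z)`). -/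
noncomputable def Rz (θ : ℝ) (p : ℝ × ℝ × ℝ) : ℝ × ℝ × ℝ :=
  (cos θ * p.1 - sin θ * p.2.1, sin θ * p.1 + cos θ * p.2.1, p.2.2)

/-- Rotation of `ℝ³` by angle `θ` about the `y`-axis (coordinates `(x, y, z)`). -/
noncomputable def Ry (θ : ℝ) (p : ℝ × ℝ × ℝ) : ℝ × ℝ × ℝ :=
  (cos θ * p.1 + sin θ * p.2.2, p.2.1, -sin θ * p.1 + cos θ * p.2.2)

/-- The modular rotation `M̃^z_θ`: rotate by `θ` about the `z`-axis, and if the result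
has strictly positive `y`-coordinate rotate by an additional `π`. -/
noncomputable def Mz (θ : ℝ) (p : ℝ × ℝ × ℝ) : ℝ × ℝ × ℝ :=
  if 0 < (Rz θ p).2.1 then Rz (θ + π) p else Rz θ p

/-- The hemispherical-shell piecewise isometry
`M_{α,β,γ} = R^y_γ ∘ M̃^z_β ∘ R^y_{−γ} ∘ M̃^z_α`. -/
noncomputable def Mpwi (α β γ : ℝ) (p : ℝ × ℝ × ℝ) : ℝ × ℝ × ℝ :=
  Ry γ (Mz β (Ry (-γ) (Mz α p)))

/-- Reflection across the `yz`-plane, `(x,y,z) ↦ (−x,y,z)`. -/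
def Syz (p : ℝ × ℝ × ℝ) : ℝ × ℝ × ℝ := (-p.1, p.2.1, p.2.2)

/-- Reflection across the `xy`-plane, `(x,y,z) ↦ (x,y,−z)`. -/
def Sxy (p : ℝ × ℝ × ℝ) : ℝ × ℝ × ℝ := (p.1, p.2.1, -p.2.2)


lemma syz_syz (p : ℝ × ℝ × ℝ) : Syz (Syz p) = p := by simp [Syz]

lemma syz_rz (θ : ℝ) (p : ℝ × ℝ × ℝ) : Syz (Rz θ p) = Rz (-θ) (Syz p) := by
  simp [Syz, Rz, cos_neg, sin_neg, Prod.ext_iff]; ring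

lemma syz_ry (θ : ℝ) (p : ℝ × ℝ × ℝ) : Syz (Ry θ p) = Ry (-θ) (Syz p) := by
  simp [Syz, Ry, cos_neg, sin_neg, Prod.ext_iff]; ring

lemma syz_mz (θ : ℝ) (p : ℝ × ℝ × ℝ) : Syz (Mz θ p) = Mz (-θ) (Syz p) := by
  have hy : (Rz (-θ) (Syz p)).2.1 = (Rz θ p).2.1 := by
    rw [← syz_rz]; rfl
  unfold Mz
  rw [hy]
  split_ifs with h
  · rw [syz_rz]
    simp [Rz, cos_add, sin_add, cos_neg, sin_neg, Prod.ext_iff]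
  · exact syz_rz θ p

/-- Symmetry `M_{α,β,γ} = S_yz ∘ M_{−α,−β,−γ} ∘ S_yz`. -/
theorem pwi_symm_negate_all (α β γ : ℝ) (p : ℝ × ℝ × ℝ)
    (hp : p.1^2 + p.2.1^2 + p.2.2^2 = 1) :
    Mpwi α β γ p = Syz (Mpwi (-α) (-β) (-γ) (Syz p)) := by
  rw [← syz_syz (Mpwi α β γ p)]
  congr 1
  unfold Mpwi
  rw [syz_ry, syz_mz, syz_ry, syz_mz]
end

section
/- For all α, β, γ ∈ ℝ and every point p ∈ S², the hemispherical-shell piecewise isometry satisfies M_{α,β,γ}(p) = S_xy( M_{α,β,−γ}( S_xy(p) ) ); that is, M_{α,β,γ} = S_xy ∘ M_{α,β,−γ} ∘ S_xy. -/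
open Real

lemma Sxy_Sxy (p : ℝ × ℝ × ℝ) : Sxy (Sxy p) = p := by simp [Sxy]

lemma Rz_Sxy (θ : ℝ) (p : ℝ × ℝ × ℝ) : Rz θ (Sxy p) = Sxy (Rz θ p) := by
  simp [Rz, Sxy]

lemma Mz_Sxy (θ : ℝ) (p : ℝ × ℝ × ℝ) : Mz θ (Sxy p) = Sxy (Mz θ p) := by
  have h : ∀ q : ℝ × ℝ × ℝ, (Sxy q).2.1 = q.2.1 := fun _ => rfl
  simp only [Mz, Rz_Sxy, h, apply_ite Sxy]

lemma Ry_Sxy (θ : ℝ) (p : ℝ × ℝ × ℝ) : Ry θ (Sxy p) = Sxy (Ry (-θ) p) := by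
  simp only [Ry, Sxy, Real.cos_neg, Real.sin_neg, Prod.mk.injEq]
  exact ⟨by ring, trivial, by ring⟩

/-- Symmetry `M_{α,β,γ} = S_xy ∘ M_{α,β,−γ} ∘ S_xy`. -/
theorem pwi_symm_negate_gamma (α β γ : ℝ) (p : ℝ × ℝ × ℝ)
    (hp : p.1^2 + p.2.1^2 + p.2.2^2 = 1) :
    Mpwi α β γ p = Sxy (Mpwi α β (-γ) (Sxy p)) := by
  simp only [Mpwi, Mz_Sxy, Ry_Sxy, neg_neg, Sxy_Sxy]
end

section
/- For all α, β, γ ∈ ℝ and every point p ∈ S², the hemispherical-shell piecewise isometry satisfies M_{α,β,γ}(p) = M_{α,−β,γ−π}(p); that is, the maps M_{α,β,γ} and M_{α,−β,γ−π} are identical. -/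
open Real

/-- Symmetry `M_{α,β,γ} = M_{α,−β,γ−π}`. -/
theorem pwi_symm_beta_gamma (α β γ : ℝ) (p : ℝ × ℝ × ℝ)
    (hp : p.1^2 + p.2.1^2 + p.2.2^2 = 1) :
    Mpwi α β γ p = Mpwi α (-β) (γ - π) p := by
  set q := Mz α p with hq
  show Ry γ (Mz β (Ry (-γ) q)) = Ry (γ - π) (Mz (-β) (Ry (-(γ - π)) q))
  have hcond : (Rz (-β) (Ry (-(γ - π)) q)).2.1 = (Rz β (Ry (-γ) q)).2.1 := by
    simp [Rz, Ry, cos_sub, sin_sub, cos_neg, sin_neg]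
    ring
  rw [Mz, Mz, hcond]
  split_ifs with h <;>
    refine Prod.ext ?_ (Prod.ext ?_ ?_) <;>
    simp [Rz, Ry, cos_sub, sin_sub, cos_add, sin_add, cos_neg, sin_neg] <;> ring
end

section
/- For all α, β, γ ∈ ℝ and every point p ∈ S², the hemispherical-shell piecewise isometry satisfies M_{α,β,γ}(p) = R^y_π( M_{−α,−β,γ}( R^y_π(p) ) ); that is, M_{α,β,γ} = R^y_π ∘ M_{−α,−β,γ} ∘ R^y_π. -/
open Real

lemma Ry_pi (q : ℝ × ℝ × ℝ) : Ry π q = (-q.1, q.2.1, -q.2.2) := by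
  simp [Ry]

lemma Ry_pi_Ry_pi (q : ℝ × ℝ × ℝ) : Ry π (Ry π q) = q := by
  simp [Ry_pi]

lemma Mz_neg_Ry_pi (θ : ℝ) (q : ℝ × ℝ × ℝ) : Mz (-θ) (Ry π q) = Ry π (Mz θ q) := by
  have hc : (Rz (-θ) (Ry π q)).2.1 = (Rz θ q).2.1 := by
    simp [Rz, Ry_pi]
  unfold Mz
  rw [hc]
  split <;>
    simp [Rz, Ry_pi, cos_add, sin_add, neg_add_eq_sub, cos_pi_sub, sin_pi_sub]

lemma Ry_neg_Ry_pi (γ : ℝ) (q : ℝ × ℝ × ℝ) : Ry (-γ) (Ry π q) = Ry π (Ry (-γ) q) := by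
  simp [Ry, Ry_pi]; ring_nf; simp

/-- Symmetry `M_{α,β,γ} = R^y_π ∘ M_{−α,−β,γ} ∘ R^y_π`. -/
theorem pwi_symm_negate_two (α β γ : ℝ) (p : ℝ × ℝ × ℝ)
    (hp : p.1^2 + p.2.1^2 + p.2.2^2 = 1) :
    Mpwi α β γ p = Ry π (Mpwi (-α) (-β) γ (Ry π p)) := by
  unfold Mpwi
  rw [Mz_neg_Ry_pi, Ry_neg_Ry_pi, Mz_neg_Ry_pi]
  have : Ry γ (Ry π (Mz β (Ry (-γ) (Mz α p)))) = Ry π (Ry γ (Mz β (Ry (-γ) (Mz α p)))) := by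
    simp [Ry, Ry_pi]; ring_nf; simp
  rw [this, Ry_pi_Ry_pi]
end

section
/- For all α, β, γ ∈ ℝ and every point p ∈ S², the hemispherical-shell piecewise isometry satisfies M_{α,β,γ}(p) = R^y_π( M_{−α,β,γ−π}( R^y_π(p) ) ); that is, M_{α,β,γ} = R^y_π ∘ M_{−α,β,γ−π} ∘ R^y_π. -/
open Real

private lemma Ry_Ry (a b : ℝ) (p : ℝ × ℝ × ℝ) : Ry a (Ry b p) = Ry (a + b) p := by
  obtain ⟨x, y, z⟩ := p
  simp only [Ry, Real.cos_add, Real.sin_add, Prod.mk.injEq]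
  exact ⟨by ring, trivial, by ring⟩

private lemma Ry_eq_of_eq (a b : ℝ) (h1 : Real.cos a = Real.cos b)
    (h2 : Real.sin a = Real.sin b) (p : ℝ × ℝ × ℝ) : Ry a p = Ry b p := by
  simp [Ry, h1, h2]

private lemma Mz_neg (α : ℝ) (p : ℝ × ℝ × ℝ) : Mz (-α) (Ry π p) = Ry π (Mz α p) := by
  obtain ⟨x, y, z⟩ := p
  have hy : (Rz (-α) (Ry π (x, y, z))).2.1 = (Rz α (x, y, z)).2.1 := by
    simp only [Rz, Ry, Real.cos_neg, Real.sin_neg, Real.cos_pi, Real.sin_pi]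
    ring
  simp only [Mz, hy]
  split_ifs with h
  · simp only [Rz, Ry, Real.cos_add, Real.sin_add, Real.cos_neg, Real.sin_neg,
      Real.cos_pi, Real.sin_pi, Prod.mk.injEq]
    refine ⟨by ring, by ring, by ring⟩
  · simp only [Rz, Ry, Real.cos_neg, Real.sin_neg, Real.cos_pi, Real.sin_pi, Prod.mk.injEq]
    refine ⟨by ring, by ring, by ring⟩

/-- Symmetry `M_{α,β,γ} = R^y_π ∘ M_{−α,β,γ−π} ∘ R^y_π`. -/
theorem pwi_symm_alpha_gamma (α β γ : ℝ) (p : ℝ × ℝ × ℝ)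
    (hp : p.1^2 + p.2.1^2 + p.2.2^2 = 1) :
    Mpwi α β γ p = Ry π (Mpwi (-α) β (γ - π) (Ry π p)) := by
  unfold Mpwi
  rw [Mz_neg, Ry_Ry, Ry_Ry]
  have h1 : Ry (-(γ - π) + π) (Mz α p) = Ry (-γ) (Mz α p) := by
    apply Ry_eq_of_eq <;>
      simp [show -(γ - π) + π = -γ + 2 * π by ring, Real.cos_add, Real.sin_add]
  have h2 : Ry (π + (γ - π)) (Mz β (Ry (-γ) (Mz α p))) = Ry γ (Mz β (Ry (-γ) (Mz α p))) := by
    apply Ry_eq_of_eq <;> simp [show π + (γ - π) = γ by ring]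
  rw [h1, h2]
end

section
/- Time-reversal symmetry: let F = R^y_γ ∘ S_yz. For all α, β, γ ∈ ℝ and every point p ∈ S² with strictly negative y-coordinate such that, in evaluating the composition M_{β,α,γ} ∘ F ∘ M_{α,β,γ} ∘ F at p, every application of a modular rotation produces a point with strictly negative y-coordinate (i.e., no intermediate point lies on the equator {y = 0}), one has M_{β,α,γ}( F( M_{α,β,γ}( F(p) ) ) ) = p; that is, M_{α,β,γ} = (R^y_γ ∘ S_yz) ∘ M^{−1}_{β,α,γ} ∘ (R^y_γ ∘ S_yz) on such points. -/
open Real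

lemma Rz_Syz_Rz (a b : ℝ) (q : ℝ × ℝ × ℝ) :
    Rz a (Syz (Rz b q)) = Syz (Rz (b - a) q) := by
  simp only [Rz, Syz, cos_sub, sin_sub, Prod.ext_iff]
  refine ⟨by ring, by ring, trivial⟩

lemma Syz_Ry (θ : ℝ) (q : ℝ × ℝ × ℝ) : Syz (Ry θ q) = Ry (-θ) (Syz q) := by
  simp only [Ry, Syz, cos_neg, sin_neg, Prod.ext_iff]
  refine ⟨by ring, trivial, by ring⟩

lemma Ry_Ry_s16 (θ : ℝ) (q : ℝ × ℝ × ℝ) : Ry θ (Ry (-θ) q) = q := by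
  have h := sin_sq_add_cos_sq θ
  simp only [Ry, cos_neg, sin_neg, Prod.ext_iff]
  refine ⟨by linear_combination q.1 * h, trivial, by linear_combination q.2.2 * h⟩

lemma Rz_pi_y (q : ℝ × ℝ × ℝ) : (Rz π q).2.1 = -q.2.1 := by
  simp [Rz]

lemma key (θ : ℝ) (q : ℝ × ℝ × ℝ) (hq : q.2.1 < 0) :
    Mz θ (Syz (Mz θ q)) = Syz q := by
  unfold Mz
  split_ifs with h h2 h3
  · rw [Rz_Syz_Rz]
    have e : θ + π - (θ + π) = 0 := by ring
    rw [e]; simp [Rz, Syz]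
  · exfalso
    rw [Rz_Syz_Rz] at h2
    have e : θ + π - θ = π := by ring
    rw [e] at h2
    push_neg at h2
    rw [show (Syz (Rz π q)).2.1 = (Rz π q).2.1 from rfl, Rz_pi_y] at h2
    linarith
  · exfalso
    rw [Rz_Syz_Rz] at h3
    have e : θ - θ = 0 := by ring
    rw [e] at h3
    simp [Rz, Syz] at h3
    linarith
  · rw [Rz_Syz_Rz]
    have e : θ - θ = 0 := by ring
    rw [e]; simp [Rz, Syz]

lemma Ry_y (θ : ℝ) (q : ℝ × ℝ × ℝ) : (Ry θ q).2.1 = q.2.1 := rfl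
lemma Syz_y (q : ℝ × ℝ × ℝ) : (Syz q).2.1 = q.2.1 := rfl
lemma Syz_Syz (q : ℝ × ℝ × ℝ) : Syz (Syz q) = q := by simp [Syz]

/-- Time-reversal symmetry: with `F = R^y_γ ∘ S_yz`, one has
`M_{β,α,γ} ∘ F ∘ M_{α,β,γ} ∘ F = id` on points of the open lower hemisphere whose
evaluation never places the output of a modular rotation on or above the equator;
i.e. `M_{α,β,γ} = F ∘ M^{−1}_{β,α,γ} ∘ F` on such points. -/
theorem pwi_time_reversal (α β γ : ℝ) (p : ℝ × ℝ × ℝ)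
    (hp : p.1^2 + p.2.1^2 + p.2.2^2 = 1) (hy : p.2.1 < 0)
    (h1 : (Mz α (Ry γ (Syz p))).2.1 < 0)
    (h2 : (Mz β (Ry (-γ) (Mz α (Ry γ (Syz p))))).2.1 < 0)
    (h3 : (Mz β (Ry γ (Syz (Mpwi α β γ (Ry γ (Syz p)))))).2.1 < 0)
    (h4 : (Mz α (Ry (-γ) (Mz β (Ry γ (Syz (Mpwi α β γ (Ry γ (Syz p)))))))).2.1 < 0) :
    Mpwi β α γ (Ry γ (Syz (Mpwi α β γ (Ry γ (Syz p))))) = p := by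
  set s := Ry γ (Syz p) with hs
  have hsy : s.2.1 < 0 := by rw [hs, Ry_y, Syz_y]; exact hy
  have hq : (Ry (-γ) (Mz α s)).2.1 < 0 := by rw [Ry_y]; exact h1
  have step1 : Ry γ (Syz (Mpwi α β γ s)) = Syz (Mz β (Ry (-γ) (Mz α s))) := by
    rw [Mpwi, Syz_Ry, Ry_Ry_s16]
  rw [step1, Mpwi, key β _ hq]
  have step2 : Ry (-γ) (Syz (Ry (-γ) (Mz α s))) = Syz (Mz α s) := by
    rw [Syz_Ry, neg_neg]
    have h5 := Ry_Ry_s16 (-γ) (Syz (Mz α s))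
    rw [neg_neg] at h5
    exact h5
  rw [step2, key α _ hsy, hs, Syz_Ry, Syz_Syz, Ry_Ry_s16]
end

section
/- For all α, β, γ ∈ ℝ and every point p ∈ S², the square of the hemispherical-shell piecewise isometry factors as M_{α,β,γ}²(p) = (S_xy ∘ R^y_{−γ} ∘ M̃^z_β)( M_{β,α,γ}( (R^y_γ ∘ M̃^z_α ∘ S_xy)(p) ) ); that is, M_{α,β,γ}² = (S_xy ∘ R^y_{−γ} ∘ M̃^z_β) ∘ M_{β,α,γ} ∘ (R^y_γ ∘ M̃^z_α ∘ S_xy). -/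
open Real

/-- The square of the PWI factors as
`M_{α,β,γ}² = (S_xy ∘ R^y_{−γ} ∘ M̃^z_β) ∘ M_{β,α,γ} ∘ (R^y_γ ∘ M̃^z_α ∘ S_xy)`. -/
theorem pwi_square_factorization (α β γ : ℝ) (p : ℝ × ℝ × ℝ)
    (hp : p.1^2 + p.2.1^2 + p.2.2^2 = 1) :
    Mpwi α β γ (Mpwi α β γ p) =
      Sxy (Ry (-γ) (Mz β (Mpwi β α γ (Ry γ (Mz α (Sxy p)))))) := by
  simp only [Mpwi, Mz_Sxy, Ry_Sxy, neg_neg, Sxy_Sxy]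
end
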